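/- arXiv:1108.2715 — 2 statements merged into one kernel-verified Lean document; each statement's English description precedes it below -/
import Mathlib

section
/- For any real numbers f(u), g(u) (i.e., with φ(u) = e(f(u) − g(u)) where e(t) = exp(2πit)), if |f'(u) − g'(u)| ≤ Δ for all u in [A,B], then |Σ_{A < n ≤ B} aₙ e(f(n))| ≤ (1 + 2π·(B − A)·Δ) · max_{A ≤ u ≤ B} |Σ_{A < n ≤ u} aₙ e(g(n))|. -/
/-!
Write `e(f(n)) = φ(n) e(g(n))` with `φ = e(f - g)`. Then `|φ| = 1`, and by the mean value
theorem `φ` moves by at most `2πΔ` between consecutive integers of `[A, B]`. Abel summation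
against the partial sums of `aₙ e(g(n))` bounds the sum by `M` for the last term plus `2πΔ M`
for each of the at most `B - A` differences `φ(n + 1) - φ(n)`.
-/

open Set Finset Real

/-- `e t = exp(2πit)`. -/
noncomputable def e (t : ℝ) : ℂ := Complex.exp (2 * Real.pi * Complex.I * t)

theorem e_eq_exp_I_mul (t : ℝ) : e t = Complex.exp (Complex.I * ↑(2 * π * t)) := by
  rw [e]; push_cast; ring_nf

theorem norm_e (t : ℝ) : ‖e t‖ = 1 := by
  rw [e_eq_exp_I_mul, Complex.norm_exp_I_mul_ofReal]

theorem e_sub_mul_e (s t : ℝ) : e (s - t) * e t = e s := by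
  simp only [e, ← Complex.exp_add]
  push_cast; ring_nf

theorem norm_e_sub_e_le (s t : ℝ) : ‖e s - e t‖ ≤ 2 * π * |s - t| := by
  calc ‖e s - e t‖ = ‖e (s - t) - 1‖ := by
        rw [← e_sub_mul_e s t, ← sub_one_mul, norm_mul, norm_e, mul_one]
    _ ≤ ‖2 * π * (s - t)‖ := by
        rw [e_eq_exp_I_mul]; exact Real.norm_exp_I_mul_ofReal_sub_one_le
    _ = 2 * π * |s - t| := by
        rw [norm_mul, Real.norm_of_nonneg (by positivity), Real.norm_eq_abs]

theorem Finset.sum_Ioc_int_eq_sum_range {M : Type*} [AddCommMonoid M] (F : ℤ → M) (m : ℤ)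
    (K : ℕ) : ∑ n ∈ Ioc m (m + K), F n = ∑ i ∈ range K, F (m + 1 + i) := by
  refine (sum_nbij' (fun i : ℕ => m + 1 + i) (fun n => (n - m - 1).toNat) ?_ ?_ ?_ ?_ ?_).symm
  all_goals intro x hx
  all_goals simp_all
  all_goals omega

theorem Int.cast_mem_Icc_of_mem_Ioc_floor {A B : ℝ} {n : ℤ} (hn : n ∈ Finset.Ioc ⌊A⌋ ⌊B⌋) :
    (n : ℝ) ∈ Icc A B := by
  rw [Finset.mem_Ioc] at hn
  exact ⟨(Int.floor_lt.1 hn.1).le, Int.le_floor.1 hn.2⟩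

theorem norm_sum_range_smul_le {R E : Type*} [NormedRing R] [NormedAddCommGroup E] [Module R E]
    [IsBoundedSMul R E] (ψ : ℕ → R) (c : ℕ → E) (K : ℕ) {M δ : ℝ} (hψ : ‖ψ (K - 1)‖ ≤ 1)
    (hψ_step : ∀ i < K - 1, ‖ψ (i + 1) - ψ i‖ ≤ δ) (hc : ∀ j ≤ K, ‖∑ i ∈ range j, c i‖ ≤ M) :
    ‖∑ i ∈ range K, ψ i • c i‖ ≤ (1 + (K - 1 : ℕ) * δ) * M := by
  have hM : 0 ≤ M := by simpa using hc 0 K.zero_le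
  rw [sum_range_by_parts]
  calc _ ≤ ‖ψ (K - 1) • ∑ i ∈ range K, c i‖ + ‖∑ i ∈ range (K - 1),
          (ψ (i + 1) - ψ i) • ∑ j ∈ range (i + 1), c j‖ := norm_sub_le _ _
    _ ≤ 1 * M + ∑ i ∈ range (K - 1), δ * M := by
        gcongr
        · exact (norm_smul_le _ _).trans (mul_le_mul hψ (hc K le_rfl) (norm_nonneg _) zero_le_one)
        · refine (norm_sum_le _ _).trans (sum_le_sum fun i hi => ?_)
          rw [Finset.mem_range] at hi
          exact (norm_smul_le _ _).trans <| mul_le_mul (hψ_step i hi) (hc (i + 1) (by omega))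
            (norm_nonneg _) ((norm_nonneg _).trans (hψ_step i hi))
    _ = (1 + (K - 1 : ℕ) * δ) * M := by
        rw [sum_const, card_range, nsmul_eq_mul]; ring

theorem abs_sub_sub_le_of_abs_derivWithin_sub_le {f g : ℝ → ℝ} {s : Set ℝ} {Δ : ℝ}
    (hs : Convex ℝ s) (hf : DifferentiableOn ℝ f s) (hg : DifferentiableOn ℝ g s)
    (hΔ : ∀ u ∈ s, |derivWithin f s u - derivWithin g s u| ≤ Δ) {x y : ℝ} (hx : x ∈ s)
    (hy : y ∈ s) : |(f y - g y) - (f x - g x)| ≤ Δ * |y - x| := by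
  simpa using hs.norm_image_sub_le_of_norm_derivWithin_le (hf.sub hg)
    (fun u hu => by rw [derivWithin_sub (hf u hu) (hg u hu)]; exact hΔ u hu) hx hy

theorem norm_e_sub_sub_e_sub_le {f g : ℝ → ℝ} {s : Set ℝ} {Δ : ℝ}
    (hs : Convex ℝ s) (hf : DifferentiableOn ℝ f s) (hg : DifferentiableOn ℝ g s)
    (hΔ : ∀ u ∈ s, |derivWithin f s u - derivWithin g s u| ≤ Δ) {x y : ℝ} (hx : x ∈ s)
    (hy : y ∈ s) : ‖e (f y - g y) - e (f x - g x)‖ ≤ 2 * π * Δ * |y - x| := by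
  rw [mul_assoc]
  exact (norm_e_sub_e_le _ _).trans <| by
    gcongr; exact abs_sub_sub_le_of_abs_derivWithin_sub_le hs hf hg hΔ hx hy

theorem Nat.cast_sub_one_le_sub_of_floor_eq_add {A B : ℝ} {K : ℕ} (hAB : A ≤ B)
    (hK : ⌊B⌋ = ⌊A⌋ + K) : ((K - 1 : ℕ) : ℝ) ≤ B - A := by
  rcases K.eq_zero_or_pos with rfl | hK0
  · simpa using hAB
  have hK' : (⌊B⌋ : ℝ) = ⌊A⌋ + K := by exact_mod_cast hK
  rw [Nat.cast_sub hK0, Nat.cast_one]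
  linarith [Int.lt_floor_add_one A, Int.floor_le B]

/-- If `f, g` are continuously differentiable on `[A, B]` with
`|f'(u) − g'(u)| ≤ Δ` on `[A, B]`, and every partial sum `∑_{A < n ≤ u} aₙ e(g(n))` is
bounded by `M` in modulus, then
`|∑_{A < n ≤ B} aₙ e(f(n))| ≤ (1 + 2π (B − A) Δ) * M`. -/
theorem stmt7 (A B : ℝ) (hAB : A < B) (a : ℤ → ℂ) (f g : ℝ → ℝ) (Δ : ℝ)
    (hf : ContDiffOn ℝ 1 f (Icc A B)) (hg : ContDiffOn ℝ 1 g (Icc A B))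
    (hΔ : ∀ u ∈ Icc A B, |derivWithin f (Icc A B) u - derivWithin g (Icc A B) u| ≤ Δ)
    (M : ℝ)
    (hS : ∀ u ∈ Icc A B, ‖∑ n ∈ Finset.Ioc ⌊A⌋ ⌊u⌋, a n * e (g n)‖ ≤ M) :
    ‖∑ n ∈ Finset.Ioc ⌊A⌋ ⌊B⌋, a n * e (f n)‖ ≤
      (1 + 2 * Real.pi * (B - A) * Δ) * M := by
  have hA : A ∈ Icc A B := left_mem_Icc.2 hAB.le
  have hM : 0 ≤ M := by simpa using hS A hA
  have hΔ0 : 0 ≤ Δ := (abs_nonneg _).trans (hΔ A hA)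
  obtain ⟨K, hK⟩ : ∃ K : ℕ, ⌊B⌋ = ⌊A⌋ + K :=
    ⟨(⌊B⌋ - ⌊A⌋).toNat, by have := Int.floor_mono hAB.le; omega⟩
  set x : ℕ → ℝ := fun i => ((⌊A⌋ + 1 + i : ℤ) : ℝ) with hx_def
  have hx : ∀ i < K, x i ∈ Icc A B := fun i hi =>
    Int.cast_mem_Icc_of_mem_Ioc_floor (by rw [Finset.mem_Ioc]; omega)
  have hpartial : ∀ j ≤ K, ‖∑ i ∈ range j, a (⌊A⌋ + 1 + i) * e (g (x i))‖ ≤ M := by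
    intro j hj
    rcases j.eq_zero_or_pos with rfl | hj0
    · simpa using hM
    have hj : ((⌊A⌋ + j : ℤ) : ℝ) ∈ Icc A B :=
      Int.cast_mem_Icc_of_mem_Ioc_floor (by rw [Finset.mem_Ioc]; omega)
    simpa only [Int.floor_intCast, sum_Ioc_int_eq_sum_range] using hS _ hj
  have hstep : ∀ i < K - 1,
      ‖e (f (x (i + 1)) - g (x (i + 1))) - e (f (x i) - g (x i))‖ ≤ 2 * π * Δ := fun i hi => by
    simpa [hx_def] using norm_e_sub_sub_e_sub_le (convex_Icc A B)
      (hf.differentiableOn one_ne_zero) (hg.differentiableOn one_ne_zero) hΔ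
      (hx i (by omega)) (hx (i + 1) (by omega))
  rw [hK, sum_Ioc_int_eq_sum_range]
  calc _ = ‖∑ i ∈ range K, e (f (x i) - g (x i)) • (a (⌊A⌋ + 1 + i) * e (g (x i)))‖ := by
        congr 1
        refine sum_congr rfl fun i _ => ?_
        rw [smul_eq_mul, mul_left_comm, e_sub_mul_e]
    _ ≤ (1 + (K - 1 : ℕ) * (2 * π * Δ)) * M :=
        norm_sum_range_smul_le _ _ K (norm_e _).le hstep hpartial
    _ ≤ (1 + (B - A) * (2 * π * Δ)) * M := by
        gcongr; exact Nat.cast_sub_one_le_sub_of_floor_eq_add hAB.le hK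
    _ = (1 + 2 * π * (B - A) * Δ) * M := by ring
end

section
/- Let F(s) = Σ aₙ n^{−s} be absolutely convergent for Re s > 1 with multiplicative coefficients aₙ and a₁ = 1, and let χ be a Dirichlet character mod q and d ∈ ℕ. Then for Re s > 1, Σ_{n=1}^∞ a_{dn} χ(n) n^{−s} = G_d(s,χ)·F(s,χ), where F(s,χ) = Σ aₙ χ(n) n^{−s} and G_d(s,χ) = ∏_{p | d} (Σ_{k≥0} a_{p^{α(p)+k}} χ(p)^k p^{−ks}) / (Σ_{k≥0} a_{p^k} χ(p)^k p^{−ks}), with d = ∏_{p|d} p^{α(p)} the prime factorization of d. -/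
/-!
Write `n = m u` with every prime factor of `m` dividing `d` and `u` coprime to `d`. By
multiplicativity, `a_{dn} χ(n) n^{-s}` factors as a product of one local term for each
`p ∣ d` and `a_u χ(u) u^{-s}`, so absolute convergence gives
`∑ₙ a_{dn} χ(n) n^{-s} = ∏_{p ∣ d} A_p(d) · ∑_{(u, d) = 1} a_u χ(u) u^{-s}`, where `A_p(d)` is
the numerator of the `p`-factor of `G_d`. For `d = 1` the same identity expresses `F(s, χ)`
through the denominators and the same sum over `u`, and dividing gives the theorem. The primes
are split off one at a time, through the bijection `(k, v) ↦ p^k v`.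
-/

open Finset

def avoiding (Q : Finset ℕ) : Set ℕ := {u | u ≠ 0 ∧ ∀ r ∈ Q, ¬ r ∣ u}

def powMulEquivAvoiding {p : ℕ} (hp : p.Prime) {Q : Finset ℕ} (hQ : ∀ r ∈ Q, Nat.Coprime r p) :
    ℕ × avoiding (insert p Q) ≃ avoiding Q where
  toFun x := ⟨p ^ x.1 * x.2, mul_ne_zero (pow_ne_zero _ hp.ne_zero) x.2.2.1,
    fun r hr hdvd ↦ x.2.2.2 r (mem_insert_of_mem hr)
      (((hQ r hr).pow_right x.1).dvd_of_dvd_mul_left hdvd)⟩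
  invFun u := ⟨u.1.factorization p, ordCompl[p] u.1, (Nat.ordCompl_pos p u.2.1).ne', by
    simp only [mem_insert, forall_eq_or_imp]
    exact ⟨Nat.not_dvd_ordCompl hp u.2.1,
      fun r hr h ↦ u.2.2 r hr (h.trans (Nat.ordCompl_dvd u.1 p))⟩⟩
  left_inv := by
    rintro ⟨k, v, hv0, hv⟩
    have hfac : (p ^ k * v).factorization p = k := by
      rw [Nat.factorization_mul (pow_ne_zero k hp.ne_zero) hv0, Finsupp.add_apply,
        hp.factorization_pow, Finsupp.single_eq_same,
        Nat.factorization_eq_zero_of_not_dvd (hv p (mem_insert_self p Q)), add_zero]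
    ext
    · exact hfac
    · simp only [hfac]
      exact Nat.mul_div_cancel_left v (pow_pos hp.pos k)
  right_inv u := Subtype.ext (Nat.ordProj_mul_ordCompl_eq_self u.1 p)

lemma Nat.primeFactors_ordCompl (n p : ℕ) :
    (ordCompl[p] n).primeFactors = n.primeFactors.erase p := by
  rw [← Nat.support_factorization, Nat.factorization_ordCompl, Finsupp.support_erase,
    Nat.support_factorization]

section

variable {q : ℕ} (χ : DirichletCharacter ℂ q) (s : ℂ)

noncomputable def twistedTerm (b : ℕ → ℂ) (n : ℕ) : ℂ :=
  b n * χ n * (n : ℂ) ^ (-s)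

lemma twistedTerm_pow (b : ℕ → ℂ) (p k : ℕ) :
    twistedTerm χ s b (p ^ k) = b (p ^ k) * χ p ^ k * (p : ℂ) ^ (-(k : ℂ) * s) := by
  rw [twistedTerm, Nat.cast_pow, map_pow, Nat.cast_pow, ← Complex.natCast_cpow_natCast_mul,
    neg_mul, mul_neg]

variable {χ s}

lemma twistedTerm_zero {b : ℕ → ℂ} (hs : s ≠ 0) : twistedTerm χ s b 0 = 0 := by
  simp [twistedTerm, Complex.zero_cpow (neg_ne_zero.mpr hs)]

lemma tsum_avoiding_empty (hs : s ≠ 0) (b : ℕ → ℂ) :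
    ∑' u : avoiding ∅, twistedTerm χ s b u = ∑' n, twistedTerm χ s b n :=
  tsum_subtype_eq_of_support_subset fun n hn ↦
    ⟨fun h ↦ hn (h ▸ twistedTerm_zero hs), by simp⟩

lemma summable_norm_twistedTerm {b : ℕ → ℂ} {x : ℝ} (hs : x < s.re)
    (hb : ∃ C, ∀ n ≠ 0, ‖b n‖ ≤ C * n ^ (x - 1)) :
    Summable (‖twistedTerm χ s b ·‖) := by
  obtain ⟨C, hC⟩ := hb
  have hL : LSeriesSummable (fun n ↦ b n * χ n) s :=
    LSeriesSummable_of_le_const_mul_rpow hs ⟨C, fun n hn ↦ by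
      rw [norm_mul]
      exact (mul_le_of_le_one_right (norm_nonneg _) (χ.norm_le_one n)).trans (hC n hn)⟩
  refine (summable_nat_add_iff 1).mp ((summable_nat_add_iff 1).mpr (summable_norm_iff.mpr hL)
    |>.congr fun n ↦ ?_)
  rw [LSeries.term_of_ne_zero n.succ_ne_zero, twistedTerm, Complex.cpow_neg, div_eq_mul_inv]

lemma summable_norm_twistedTerm_mul {a : ℕ → ℂ}
    (hgrowth : ∀ ε : ℝ, 0 < ε → ∃ C : ℝ, ∀ n : ℕ, 1 ≤ n → ‖a n‖ ≤ C * (n : ℝ) ^ ε)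
    (hs : 1 < s.re) {m : ℕ} (hm : m ≠ 0) :
    Summable (‖twistedTerm χ s (fun n ↦ a (m * n)) ·‖) := by
  set ε := (s.re - 1) / 2
  obtain ⟨C, hC⟩ := hgrowth ε (by simp only [ε]; linarith)
  refine summable_norm_twistedTerm (x := 1 + ε) (by simp only [ε]; linarith)
    ⟨C * m ^ ε, fun n hn ↦ ?_⟩
  calc ‖a (m * n)‖ ≤ C * ((m * n : ℕ) : ℝ) ^ ε := hC _ (Nat.one_le_iff_ne_zero.mpr (by positivity))
    _ = C * m ^ ε * n ^ (1 + ε - 1) := by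
      rw [Nat.cast_mul, Real.mul_rpow (by positivity) (by positivity), add_sub_cancel_left,
        mul_assoc]

lemma twistedTerm_mul_mul {a : ℕ → ℂ}
    (hmul : ∀ m n : ℕ, Nat.gcd m n = 1 → a (m * n) = a m * a n) {m e k v : ℕ}
    (hcop : Nat.Coprime (m * k) (e * v)) :
    twistedTerm χ s (fun n ↦ a (m * e * n)) (k * v) =
      twistedTerm χ s (fun n ↦ a (m * n)) k * twistedTerm χ s (fun n ↦ a (e * n)) v := by
  have hperm : m * e * (k * v) = m * k * (e * v) := by ring
  simp only [twistedTerm, hperm, hmul _ _ hcop, Nat.cast_mul, map_mul,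
    Complex.natCast_mul_natCast_cpow]
  ring

variable {a : ℕ → ℂ} (hmul : ∀ m n : ℕ, Nat.gcd m n = 1 → a (m * n) = a m * a n)
  (hsum : ∀ m ≠ 0, Summable (‖twistedTerm χ s (fun n ↦ a (m * n)) ·‖))
include hmul hsum

theorem tsum_twistedTerm_avoiding_eq_eulerFactor_mul {p : ℕ} (hp : p.Prime) {Q : Finset ℕ}
    (hQ : ∀ r ∈ Q, r.Prime) (hpQ : p ∉ Q) {d : ℕ} (hd : d ≠ 0) :
    ∑' u : avoiding Q, twistedTerm χ s (fun n ↦ a (d * n)) u =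
      (∑' k : ℕ, twistedTerm χ s (fun n ↦ a (p ^ d.factorization p * n)) (p ^ k)) *
        ∑' v : avoiding (insert p Q), twistedTerm χ s (fun n ↦ a (ordCompl[p] d * n)) v := by
  have hQp : ∀ r ∈ Q, Nat.Coprime r p := fun r hr ↦
    (Nat.coprime_primes (hQ r hr) hp).mpr (ne_of_mem_of_not_mem hr hpQ)
  have hsumA : Summable fun k : ℕ ↦
      ‖twistedTerm χ s (fun n ↦ a (p ^ d.factorization p * n)) (p ^ k)‖ :=
    (hsum _ (pow_ne_zero _ hp.ne_zero)).comp_injective (Nat.pow_right_injective hp.two_le)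
  have hsumB : Summable fun v : avoiding (insert p Q) ↦
      ‖twistedTerm χ s (fun n ↦ a (ordCompl[p] d * n)) v‖ :=
    (hsum _ (Nat.ordCompl_pos p hd).ne').subtype _
  rw [tsum_mul_tsum_of_summable_norm hsumA hsumB, ← (powMulEquivAvoiding hp hQp).tsum_eq]
  refine tsum_congr fun ⟨k, v, hv⟩ ↦ ?_
  have hpev : Nat.Coprime p (ordCompl[p] d * v) := (hp.coprime_iff_not_dvd).mpr
    (hp.not_dvd_mul (Nat.not_dvd_ordCompl hp hd) (hv.2 p (mem_insert_self p Q)))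
  conv_lhs => rw [← Nat.ordProj_mul_ordCompl_eq_self d p]
  exact twistedTerm_mul_mul hmul (Nat.Coprime.mul_left (hpev.pow_left _) (hpev.pow_left _))

theorem tsum_twistedTerm_avoiding {P : Finset ℕ} (hP : ∀ p ∈ P, p.Prime) {Q : Finset ℕ}
    (hQ : ∀ r ∈ Q, r.Prime) (hPQ : Disjoint P Q) {d : ℕ} (hd : d ≠ 0)
    (hdP : d.primeFactors ⊆ P) :
    ∑' u : avoiding Q, twistedTerm χ s (fun n ↦ a (d * n)) u =
      (∏ p ∈ P, ∑' k : ℕ, twistedTerm χ s (fun n ↦ a (p ^ d.factorization p * n)) (p ^ k)) *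
        ∑' u : avoiding (P ∪ Q), twistedTerm χ s a u := by
  induction P using Finset.induction_on generalizing Q d with
  | empty =>
    obtain rfl : d = 1 :=
      (Nat.primeFactors_eq_empty.mp (subset_empty.mp hdP)).resolve_left hd
    rw [prod_empty, one_mul, empty_union]
    simp only [one_mul]
  | insert p P hpP ih =>
    have hp := hP p (mem_insert_self p P)
    have hpQ : p ∉ Q := disjoint_left.mp hPQ (mem_insert_self p P)
    have hfac : ∀ r ∈ P, (ordCompl[p] d).factorization r = d.factorization r := fun r hr ↦ by
      rw [Nat.factorization_ordCompl, Finsupp.erase_ne (ne_of_mem_of_not_mem hr hpP)]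
    rw [tsum_twistedTerm_avoiding_eq_eulerFactor_mul hmul hsum hp hQ hpQ hd,
      ih (fun r hr ↦ hP r (mem_insert_of_mem hr)) (Q := insert p Q)
        (by simpa [forall_eq_or_imp] using ⟨hp, hQ⟩)
        (disjoint_insert_right.mpr ⟨hpP, (disjoint_insert_left.mp hPQ).2⟩)
        (Nat.ordCompl_pos p hd).ne'
        (by rw [Nat.primeFactors_ordCompl, ← subset_insert_iff]; exact hdP),
      prod_insert hpP, prod_congr rfl fun r hr ↦ by rw [hfac r hr], union_insert, insert_union,
      mul_assoc]

end

theorem stmt10_general (a : ℕ → ℂ)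
    (hmul : ∀ m n : ℕ, Nat.gcd m n = 1 → a (m * n) = a m * a n)
    (hgrowth : ∀ ε : ℝ, 0 < ε → ∃ C : ℝ, ∀ n : ℕ, 1 ≤ n → ‖a n‖ ≤ C * (n : ℝ) ^ ε)
    (q : ℕ) (χ : DirichletCharacter ℂ q) (d : ℕ) (hd : 1 ≤ d)
    (s : ℂ) (hs : 1 < s.re)
    (hden : ∀ p ∈ d.primeFactors,
      (∑' k : ℕ, a (p ^ k) * χ (p : ZMod q) ^ k * (p : ℂ) ^ (-(k : ℂ) * s)) ≠ 0) :
    ∑' n : ℕ, a (d * n) * χ (n : ZMod q) * (n : ℂ) ^ (-s) =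
      (∏ p ∈ d.primeFactors,
        (∑' k : ℕ, a (p ^ (d.factorization p + k)) * χ (p : ZMod q) ^ k *
            (p : ℂ) ^ (-(k : ℂ) * s)) /
        (∑' k : ℕ, a (p ^ k) * χ (p : ZMod q) ^ k * (p : ℂ) ^ (-(k : ℂ) * s))) *
      ∑' n : ℕ, a n * χ (n : ZMod q) * (n : ℂ) ^ (-s) := by
  have hs0 : s ≠ 0 := by rintro rfl; norm_num at hs
  have key := fun e (he : e ≠ 0) (hsub : e.primeFactors ⊆ d.primeFactors) ↦
    tsum_twistedTerm_avoiding hmul (fun m hm ↦ summable_norm_twistedTerm_mul (χ := χ) hgrowth hs hm)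
      (fun p ↦ Nat.prime_of_mem_primeFactors) (Q := ∅) (by simp) (disjoint_empty_right _) he hsub
  have hLd := key d (by omega) subset_rfl
  have hL1 := key 1 one_ne_zero (by simp)
  rw [union_empty, tsum_avoiding_empty hs0] at hLd hL1
  simp only [twistedTerm_pow, ← pow_add, one_mul, Nat.factorization_one, Finsupp.coe_zero,
    Pi.zero_apply, pow_zero] at hLd hL1
  change ∑' n, twistedTerm χ s (fun n ↦ a (d * n)) n = _ * ∑' n, twistedTerm χ s a n
  rw [hLd, hL1, ← mul_assoc, ← prod_mul_distrib]
  exact congrArg (· * _) (prod_congr rfl fun p hp ↦ (div_mul_cancel₀ _ (hden p hp)).symm)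

/-- For multiplicative coefficients `aₙ` with `a₁ = 1` satisfying
`aₙ ≪_ε n^ε` (so all series below converge absolutely for `Re s > 1`), a Dirichlet
character `χ` mod `q`, and `d ∈ ℕ` with `d ≥ 1`: for `Re s > 1`,
`∑ₙ a_{dn} χ(n) n^{−s} = G_d(s, χ) · F(s, χ)`, where `F(s, χ) = ∑ₙ aₙ χ(n) n^{−s}` and
`G_d(s, χ) = ∏_{p ∣ d} (∑_{k≥0} a_{p^{α(p)+k}} χ(p)^k p^{−ks}) / (∑_{k≥0} a_{p^k} χ(p)^k p^{−ks})`,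
with `α(p)` the exponent of `p` in `d` and the denominators assumed nonzero. -/
theorem stmt10 (a : ℕ → ℂ) (ha1 : a 1 = 1)
    (hmul : ∀ m n : ℕ, Nat.gcd m n = 1 → a (m * n) = a m * a n)
    (hgrowth : ∀ ε : ℝ, 0 < ε → ∃ C : ℝ, ∀ n : ℕ, 1 ≤ n → ‖a n‖ ≤ C * (n : ℝ) ^ ε)
    (q : ℕ) (χ : DirichletCharacter ℂ q) (d : ℕ) (hd : 1 ≤ d)
    (s : ℂ) (hs : 1 < s.re)
    (hden : ∀ p ∈ d.primeFactors,
      (∑' k : ℕ, a (p ^ k) * χ (p : ZMod q) ^ k * (p : ℂ) ^ (-(k : ℂ) * s)) ≠ 0) :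
    ∑' n : ℕ, a (d * n) * χ (n : ZMod q) * (n : ℂ) ^ (-s) =
      (∏ p ∈ d.primeFactors,
        (∑' k : ℕ, a (p ^ (d.factorization p + k)) * χ (p : ZMod q) ^ k *
            (p : ℂ) ^ (-(k : ℂ) * s)) /
        (∑' k : ℕ, a (p ^ k) * χ (p : ZMod q) ^ k * (p : ℂ) ^ (-(k : ℂ) * s))) *
      ∑' n : ℕ, a n * χ (n : ZMod q) * (n : ℂ) ^ (-s) :=
  stmt10_general a hmul hgrowth q χ d hd s hs hden
end
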